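/- Let a ≤ b be reals, M > 0, and let f : ℝ → ℝ be M-Lipschitz on [a,b]. Fix a step Δ > 0 and let G = {a + iΔ : i ∈ ℕ, a + iΔ ≤ b} ∪ {b} be the grid of step Δ on [a,b]. Suppose φ : ℝ → ℝ satisfies |φ(t) − f(t)| ≤ δ for every t ∈ G (a δ-noisy zeroth-order oracle on the grid), and let x̂ ∈ G satisfy φ(x̂) ≤ φ(t) for all t ∈ G. Then for every x ∈ [a,b] one has f(x̂) ≤ f(x) + MΔ + 2δ. In particular, grid search with step Δ = ε/(2M) and noise level δ ≤ ε/4 returns a point x̂ with f(x̂) − inf_{[a,b]} f ≤ ε. -/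
import Mathlib


/-- Grid search with a δ-noisy zeroth-order oracle on a Δ-grid over [a,b]:
the noisy argmin xhat over the grid satisfies f(xhat) ≤ f(x) + MΔ + 2δ for every
x ∈ [a,b]; in particular, with step Δ = ε/(2M) and noise level δ ≤ ε/4, grid
search returns a point xhat with f(xhat) − inf_{[a,b]} f ≤ ε. -/
theorem grid_search_noisy (a b M Δ δ : ℝ) (hab : a ≤ b) (hM : 0 < M) (hΔ : 0 < Δ)
    (f φ : ℝ → ℝ)
    (hf : ∀ x ∈ Set.Icc a b, ∀ y ∈ Set.Icc a b, |f x - f y| ≤ M * |x - y|)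
    (G : Set ℝ) (hG : G = {t : ℝ | ∃ i : ℕ, t = a + i * Δ ∧ t ≤ b} ∪ {b})
    (hφ : ∀ t ∈ G, |φ t - f t| ≤ δ)
    (xhat : ℝ) (hxhat : xhat ∈ G) (hmin : ∀ t ∈ G, φ xhat ≤ φ t) :
    (∀ x ∈ Set.Icc a b, f xhat ≤ f x + M * Δ + 2 * δ) ∧
    (∀ ε : ℝ, 0 < ε → Δ = ε / (2 * M) → δ ≤ ε / 4 →
      f xhat ≤ sInf (f '' Set.Icc a b) + ε) := by
  -- xhat lies in [a,b]
  have hxhatIcc : xhat ∈ Set.Icc a b := by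
    rw [hG] at hxhat
    rcases hxhat with ⟨i, hi, hib⟩ | h
    · refine ⟨?_, hib⟩
      rw [hi]
      nlinarith [Nat.cast_nonneg (α := ℝ) i, hΔ.le]
    · simp only [Set.mem_singleton_iff] at h
      rw [h]; exact ⟨hab, le_refl b⟩
  have main : ∀ x ∈ Set.Icc a b, f xhat ≤ f x + M * Δ + 2 * δ := by
    intro x hx
    obtain ⟨hax, hxb⟩ := hx
    set i : ℕ := ⌊(x - a) / Δ⌋₊ with hi
    set t : ℝ := a + i * Δ with ht
    have hnn : 0 ≤ (x - a) / Δ := div_nonneg (by linarith) hΔ.le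
    have hta : (i : ℝ) * Δ ≤ x - a := by
      have := Nat.floor_le hnn
      calc (i : ℝ) * Δ ≤ (x - a) / Δ * Δ := by
            exact mul_le_mul_of_nonneg_right this hΔ.le
        _ = x - a := div_mul_cancel₀ _ hΔ.ne'
    have htx : t ≤ x := by rw [ht]; linarith
    have hxt : x - t < Δ := by
      have h1 : (x - a) / Δ < i + 1 := Nat.lt_floor_add_one _
      have : x - a < (i + 1) * Δ := by
        calc x - a = (x - a) / Δ * Δ := (div_mul_cancel₀ _ hΔ.ne').symm
          _ < (i + 1) * Δ := by exact mul_lt_mul_of_pos_right h1 hΔ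
      rw [ht]; nlinarith
    have htG : t ∈ G := by
      rw [hG]; left; exact ⟨i, rfl, le_trans htx hxb⟩
    have htIcc : t ∈ Set.Icc a b := by
      constructor
      · rw [ht]; nlinarith [Nat.cast_nonneg (α := ℝ) i]
      · exact le_trans htx hxb
    have h1 := hφ xhat hxhat
    have h2 := hφ t htG
    have h3 := hmin t htG
    have h4 := hf t htIcc x ⟨hax, hxb⟩
    have h5 : |t - x| ≤ Δ := by rw [abs_le]; constructor <;> linarith
    have h6 : f t - f x ≤ M * Δ := by
      have := (abs_le.mp h4).2
      nlinarith [mul_le_mul_of_nonneg_left h5 hM.le]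
    have h7 := (abs_le.mp h1).1
    have h8 := (abs_le.mp h2).2
    linarith
  refine ⟨main, ?_⟩
  intro ε hε hΔε hδε
  have hMΔ : M * Δ = ε / 2 := by
    rw [hΔε]; field_simp
  have hne : (f '' Set.Icc a b).Nonempty := ⟨f a, a, ⟨le_refl a, hab⟩, rfl⟩
  have : f xhat - ε ≤ sInf (f '' Set.Icc a b) := by
    apply le_csInf hne
    rintro y ⟨x, hx, rfl⟩
    have := main x hx
    linarith
  linarith
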